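/- arXiv:2307.10707 — 6 statements merged into one kernel-verified Lean document; each statement's English description precedes it below -/
import Mathlib

section
/- Let h_R, h_T ∈ ℂ^M be nonzero, and let Θ range over unitary symmetric M×M complex matrices (Θᴴ Θ = I, Θ = Θᵀ). Then max_Θ |h_Rᴴ Θ h_T|² = ‖h_R‖² ‖h_T‖², i.e., the maximum achievable by arbitrary unitary matrices is attained within the class of unitary symmetric matrices. -/
open Matrix Complex
open scoped InnerProductSpace

noncomputable section MaxSNRAux

def toE {M : ℕ} (v : Fin M → ℂ) : EuclideanSpace ℂ (Fin M) := WithLp.toLp 2 v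

lemma toE_apply {M : ℕ} (v : Fin M → ℂ) (i : Fin M) : toE v i = v i := rfl

lemma inner_toE {M : ℕ} (u v : Fin M → ℂ) :
    ⟪toE u, toE v⟫_ℂ = star u ⬝ᵥ v := by
  simp only [PiLp.inner_apply, RCLike.inner_apply, dotProduct, toE_apply,
    Pi.star_apply, RCLike.star_def]
  exact Finset.sum_congr rfl fun _ _ => mul_comm _ _

lemma re_star_dot {M : ℕ} (v : Fin M → ℂ) :
    (star v ⬝ᵥ v).re = ∑ i, ‖v i‖ ^ 2 := by
  rw [dotProduct, Complex.re_sum]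
  refine Finset.sum_congr rfl fun i _ => ?_
  rw [Pi.star_apply, RCLike.star_def, ← Complex.normSq_eq_conj_mul_self]
  rw [Complex.ofReal_re, Complex.normSq_eq_norm_sq]

lemma norm_toE {M : ℕ} (v : Fin M → ℂ) :
    ‖toE v‖ = Real.sqrt ((star v ⬝ᵥ v).re) := by
  rw [EuclideanSpace.norm_eq, re_star_dot]
  simp only [toE_apply]

lemma conj_mul_self' (c : ℂ) : (starRingEnd ℂ) c * c = ((‖c‖ ^ 2 : ℝ) : ℂ) := by
  rw [← Complex.normSq_eq_conj_mul_self, Complex.normSq_eq_norm_sq]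

lemma sum_two {M : ℕ} {i0 i1 : Fin M} (h : i0 ≠ i1) (f : Fin M → ℂ)
    (hf : ∀ j, j ≠ i0 → j ≠ i1 → f j = 0) : ∑ j, f j = f i0 + f i1 := by
  rw [← Finset.sum_pair h]
  refine (Finset.sum_subset (Finset.subset_univ _) fun j _ hj => ?_).symm
  simp only [Finset.mem_insert, Finset.mem_singleton, not_or] at hj
  exact hf j hj.1 hj.2

lemma exists_unitary {M : ℕ} (f g : Fin M → EuclideanSpace ℂ (Fin M)) (s : Set (Fin M))
    (hf : Orthonormal ℂ (s.restrict f)) (hg : Orthonormal ℂ (s.restrict g)) :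
    ∃ V : Matrix (Fin M) (Fin M) ℂ, Vᴴ * V = 1 ∧
      ∀ i ∈ s, V *ᵥ (f i : Fin M → ℂ) = (g i : Fin M → ℂ) := by
  obtain ⟨b, hb⟩ := hf.exists_orthonormalBasis_extension_of_card_eq
    (by simp [finrank_euclideanSpace_fin])
  obtain ⟨b', hb'⟩ := hg.exists_orthonormalBasis_extension_of_card_eq
    (by simp [finrank_euclideanSpace_fin])
  set B : Matrix (Fin M) (Fin M) ℂ := Matrix.of (fun i j => b j i) with hBdef
  set B' : Matrix (Fin M) (Fin M) ℂ := Matrix.of (fun i j => b' j i) with hB'def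
  have key : ∀ (c : OrthonormalBasis (Fin M) ℂ (EuclideanSpace ℂ (Fin M))) (j k : Fin M),
      ∑ i, star (c j i) * c k i = if j = k then (1 : ℂ) else 0 := by
    intro c j k
    rw [← orthonormal_iff_ite.mp c.orthonormal j k, PiLp.inner_apply]
    simp [RCLike.inner_apply, mul_comm]
  have hBu : Bᴴ * B = 1 := by
    ext j k
    simp only [Matrix.mul_apply, Matrix.conjTranspose_apply, hBdef, Matrix.of_apply,
      Matrix.one_apply]
    exact key b j k
  have hB'u : B'ᴴ * B' = 1 := by
    ext j k
    simp only [Matrix.mul_apply, Matrix.conjTranspose_apply, hB'def, Matrix.of_apply,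
      Matrix.one_apply]
    exact key b' j k
  refine ⟨B' * Bᴴ, ?_, ?_⟩
  · rw [Matrix.conjTranspose_mul, Matrix.conjTranspose_conjTranspose, Matrix.mul_assoc,
      ← Matrix.mul_assoc B'ᴴ, hB'u, Matrix.one_mul, mul_eq_one_comm.mp hBu]
  · intro i hi
    have h1 : Bᴴ *ᵥ (f i : Fin M → ℂ) = fun j => if j = i then 1 else 0 := by
      funext j
      simp only [Matrix.mulVec, dotProduct, Matrix.conjTranspose_apply, hBdef,
        Matrix.of_apply]
      have hfi : (f i : Fin M → ℂ) = (b i : Fin M → ℂ) := by rw [hb i hi]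
      rw [hfi]
      exact key b j i
    rw [← Matrix.mulVec_mulVec, h1]
    funext l
    simp only [Matrix.mulVec, dotProduct, hB'def, Matrix.of_apply, mul_ite, mul_one,
      mul_zero]
    rw [Finset.sum_ite_eq' Finset.univ i (fun j => b' j l)]
    simp [hb' i hi]

lemma VtV_unitary {M : ℕ} (V : Matrix (Fin M) (Fin M) ℂ) (hV : Vᴴ * V = 1) :
    (Vᵀ * V)ᴴ * (Vᵀ * V) = 1 := by
  have hVV : V * Vᴴ = 1 := mul_eq_one_comm.mp hV
  have h2 : (Vᵀ)ᴴ * Vᵀ = 1 := by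
    have h3 := congrArg Matrix.transpose hVV
    rw [Matrix.transpose_mul, Matrix.transpose_one] at h3
    have h4 : Vᴴᵀ = Vᵀᴴ := by ext j k; rfl
    rwa [h4] at h3
  rw [Matrix.conjTranspose_mul, Matrix.mul_assoc, ← Matrix.mul_assoc ((Vᵀ)ᴴ), h2,
    Matrix.one_mul, hV]

lemma dot_VtV {M : ℕ} (V : Matrix (Fin M) (Fin M) ℂ) (u w : Fin M → ℂ) :
    u ⬝ᵥ ((Vᵀ * V) *ᵥ w) = (V *ᵥ u) ⬝ᵥ (V *ᵥ w) := by
  rw [← Matrix.mulVec_mulVec, Matrix.dotProduct_mulVec, Matrix.vecMul_transpose]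


set_option maxHeartbeats 1000000 in
lemma mem_aux {M : ℕ} (a b : Fin M → ℂ) (ha : a ≠ 0) (hb : b ≠ 0) :
    ∃ Θ : Matrix (Fin M) (Fin M) ℂ, Θᴴ * Θ = 1 ∧ Θ = Θᵀ ∧
      ‖a ⬝ᵥ (Θ *ᵥ b)‖ = ‖toE a‖ * ‖toE b‖ := by
  have hM : 0 < M := by
    rcases Nat.eq_zero_or_pos M with h | h
    · subst h; exact absurd (funext fun i => i.elim0) ha
    · exact h
  set na : ℝ := ‖toE a‖ with hnadef
  set nb : ℝ := ‖toE b‖ with hnbdef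
  have hna : 0 < na := norm_pos_iff.mpr (fun h => ha (funext fun i => congrFun (congrArg WithLp.ofLp h) i))
  have hnb : 0 < nb := norm_pos_iff.mpr (fun h => hb (funext fun i => congrFun (congrArg WithLp.ofLp h) i))
  have hnaC : ((na : ℝ) : ℂ) ≠ 0 := by
    simpa using hna.ne'
  have hnbC : ((nb : ℝ) : ℂ) ≠ 0 := by
    simpa using hnb.ne'
  obtain ⟨ua, huadef⟩ : ∃ u : EuclideanSpace ℂ (Fin M), u = ((na : ℝ) : ℂ)⁻¹ • toE a := ⟨_, rfl⟩
  obtain ⟨ub, hubdef⟩ : ∃ u : EuclideanSpace ℂ (Fin M), u = ((nb : ℝ) : ℂ)⁻¹ • toE b := ⟨_, rfl⟩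
  have hua1 : ‖ua‖ = 1 := by
    rw [huadef, norm_smul, norm_inv, Complex.norm_real, Real.norm_eq_abs, abs_of_pos hna,
      ← hnadef, inv_mul_cancel₀ hna.ne']
  have hub1 : ‖ub‖ = 1 := by
    rw [hubdef, norm_smul, norm_inv, Complex.norm_real, Real.norm_eq_abs, abs_of_pos hnb,
      ← hnbdef, inv_mul_cancel₀ hnb.ne']
  have hua_apply : ∀ j, ua j = ((na : ℝ) : ℂ)⁻¹ * a j := fun j => by
    rw [huadef, PiLp.smul_apply, toE_apply, smul_eq_mul]
  have hub_apply : ∀ j, ub j = ((nb : ℝ) : ℂ)⁻¹ * b j := fun j => by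
    rw [hubdef, PiLp.smul_apply, toE_apply, smul_eq_mul]
  have hadec : a = ((na : ℝ) : ℂ) • (ua : Fin M → ℂ) := by
    funext j
    rw [Pi.smul_apply, smul_eq_mul, hua_apply j]
    field_simp
  have hbdec : b = ((nb : ℝ) : ℂ) • (ub : Fin M → ℂ) := by
    funext j
    rw [Pi.smul_apply, smul_eq_mul, hub_apply j]
    field_simp
  by_cases hpar : ∃ r : ℂ, ub = r • ua
  · obtain ⟨r, hr⟩ := hpar
    have hrabs : ‖r‖ = 1 := by
      have h5 : ‖ub‖ = ‖r‖ * ‖ua‖ := by rw [hr, norm_smul]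
      rw [hub1, hua1, mul_one] at h5
      exact h5.symm
    set i0 : Fin M := ⟨0, hM⟩ with hi0def
    set x0 : EuclideanSpace ℂ (Fin M) := EuclideanSpace.single i0 1 with hx0def
    have hx01 : ‖x0‖ = 1 := by rw [hx0def, EuclideanSpace.norm_single]; norm_num
    have honA : Orthonormal ℂ (Set.restrict {i0} (fun _ : Fin M => ua)) := by
      rw [orthonormal_iff_ite]
      rintro ⟨i, hi⟩ ⟨j, hj⟩
      have hij : i = j := by
        rw [Set.mem_singleton_iff.mp hi, Set.mem_singleton_iff.mp hj]
      subst hij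
      rw [if_pos rfl]
      show ⟪ua, ua⟫_ℂ = 1
      rw [inner_self_eq_norm_sq_to_K, hua1]; norm_num
    have honB : Orthonormal ℂ (Set.restrict {i0} (fun _ : Fin M => x0)) := by
      rw [orthonormal_iff_ite]
      rintro ⟨i, hi⟩ ⟨j, hj⟩
      have hij : i = j := by
        rw [Set.mem_singleton_iff.mp hi, Set.mem_singleton_iff.mp hj]
      subst hij
      rw [if_pos rfl]
      show ⟪x0, x0⟫_ℂ = 1
      rw [inner_self_eq_norm_sq_to_K, hx01]; norm_num
    obtain ⟨V, hV, hmap⟩ := exists_unitary _ _ _ honA honB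
    have hVua : V *ᵥ (ua : Fin M → ℂ) = (x0 : Fin M → ℂ) := hmap i0 rfl
    refine ⟨Vᵀ * V, VtV_unitary V hV, by rw [Matrix.transpose_mul, Matrix.transpose_transpose], ?_⟩
    have hbdec' : b = (((nb : ℝ) : ℂ) * r) • (ua : Fin M → ℂ) := by
      rw [hbdec, hr]
      funext j
      simp only [Pi.smul_apply, PiLp.smul_apply, smul_eq_mul]
      ring
    rw [dot_VtV, hadec, hbdec', Matrix.mulVec_smul, Matrix.mulVec_smul, hVua,
      smul_dotProduct, dotProduct_smul]
    have hx0dot : (x0 : Fin M → ℂ) ⬝ᵥ (x0 : Fin M → ℂ) = 1 := by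
      simp only [dotProduct, hx0def]
      have h6 : ∀ j, (EuclideanSpace.single i0 (1:ℂ)) j * (EuclideanSpace.single i0 (1:ℂ)) j
          = if j = i0 then 1 else 0 := by
        intro j
        rw [EuclideanSpace.single_apply]
        by_cases h : j = i0 <;> simp [h]
      simp only [h6]
      simp
    rw [hx0dot, smul_eq_mul, smul_eq_mul, mul_one, norm_mul, norm_mul,
      Complex.norm_real, Complex.norm_real, Real.norm_eq_abs, Real.norm_eq_abs, hrabs,
      abs_of_pos hna, abs_of_pos hnb]
    ring
  · have huane : ua ≠ 0 := by
      intro h; rw [h] at hua1; simp at hua1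
    have hubne : ub ≠ 0 := by
      intro h; rw [h] at hub1; simp at hub1
    obtain ⟨c, hcdef⟩ : ∃ c : ℂ, c = ⟪ua, ub⟫_ℂ := ⟨_, rfl⟩
    have hcle : ‖c‖ ≤ 1 := by
      rw [hcdef]
      simpa [hua1, hub1] using norm_inner_le_norm (𝕜 := ℂ) ua ub
    have hclt : ‖c‖ < 1 := by
      rcases lt_or_eq_of_le hcle with h | h
      · exact h
      · exfalso
        obtain ⟨r, _, hr⟩ := (norm_inner_eq_norm_iff huane hubne).mp
          (by rw [← hcdef, hua1, hub1, h]; norm_num)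
        exact hpar ⟨r, hr⟩
    have hcnn : 0 ≤ ‖c‖ := norm_nonneg c
    obtain ⟨σ, hσdef⟩ : ∃ σ : ℝ, σ = Real.sqrt (1 - ‖c‖ ^ 2) := ⟨_, rfl⟩
    have hσpos : 0 < σ := by rw [hσdef]; exact Real.sqrt_pos.mpr (by nlinarith)
    have hσsq : σ ^ 2 = 1 - ‖c‖ ^ 2 := by rw [hσdef]; exact Real.sq_sqrt (by nlinarith)
    have hσC : ((σ : ℝ) : ℂ) ≠ 0 := by simpa using hσpos.ne'
    obtain ⟨e, hedef⟩ : ∃ e : EuclideanSpace ℂ (Fin M),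
        e = ((σ : ℝ) : ℂ)⁻¹ • (ub - c • ua) := ⟨_, rfl⟩
    have hinner_aa : ⟪ua, ua⟫_ℂ = 1 := by
      rw [inner_self_eq_norm_sq_to_K, hua1]; norm_num
    have hinner_bb : ⟪ub, ub⟫_ℂ = 1 := by
      rw [inner_self_eq_norm_sq_to_K, hub1]; norm_num
    have hinner_ba : ⟪ub, ua⟫_ℂ = (starRingEnd ℂ) c := by
      rw [hcdef, ← inner_conj_symm]
    have hsub_inner : ⟪ub - c • ua, ub - c • ua⟫_ℂ = ((1 - ‖c‖ ^ 2 : ℝ) : ℂ) := by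
      rw [inner_sub_left, inner_sub_right, inner_sub_right, inner_smul_left,
        inner_smul_right, inner_smul_left, inner_smul_right, hinner_aa, hinner_bb,
        hinner_ba, ← hcdef]
      have hcc := conj_mul_self' c
      push_cast at hcc ⊢
      linear_combination -hcc
    have hue : ⟪ua, e⟫_ℂ = 0 := by
      rw [hedef, inner_smul_right, inner_sub_right, inner_smul_right, hinner_aa, ← hcdef]
      ring
    have heu : ⟪e, ua⟫_ℂ = 0 := by
      rw [← inner_conj_symm, hue, map_zero]
    have hee : ⟪e, e⟫_ℂ = 1 := by
      rw [hedef, inner_smul_left, inner_smul_right, hsub_inner, Complex.conj_inv,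
        Complex.conj_ofReal]
      have hgoal : σ⁻¹ * (σ⁻¹ * (1 - ‖c‖ ^ 2)) = 1 := by
        rw [← hσsq]; field_simp
      exact_mod_cast hgoal
    have heN : ‖e‖ = 1 := by
      rw [← pow_eq_one_iff_of_nonneg (norm_nonneg e) two_ne_zero]
      simpa [← Complex.ofReal_pow] using congrArg Complex.re ((inner_self_eq_norm_sq_to_K (𝕜 := ℂ) e).symm.trans hee)
    -- M ≥ 2
    have honpair : Orthonormal ℂ ![ua, e] := by
      rw [orthonormal_iff_ite]
      intro i j
      fin_cases i <;> fin_cases j <;>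
        simp [hinner_aa, hue, heu, hee, hua1, heN]
    have h2M : 2 ≤ M := by
      have h7 := honpair.linearIndependent.fintype_card_le_finrank
      simpa [finrank_euclideanSpace_fin] using h7
    set i0 : Fin M := ⟨0, by omega⟩ with hi0def
    set i1 : Fin M := ⟨1, by omega⟩ with hi1def
    have hi01 : i0 ≠ i1 := by simp [hi0def, hi1def, Fin.ext_iff]
    -- construct x
    obtain ⟨γ, hγdef⟩ : ∃ γ : ℂ, γ = if c = 0 then 1 else (starRingEnd ℂ) c / (‖c‖ : ℝ) :=
      ⟨_, rfl⟩
    have hγnorm : ‖γ‖ = 1 := by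
      by_cases h0 : c = 0
      · rw [hγdef, if_pos h0]; norm_num
      · rw [hγdef, if_neg h0, norm_div, RCLike.norm_conj, Complex.norm_real,
          Real.norm_eq_abs, abs_of_pos (norm_pos_iff.mpr h0),
          div_self (norm_ne_zero_iff.mpr h0)]
    have hγc : γ * ((‖c‖ : ℝ) : ℂ) = (starRingEnd ℂ) c := by
      by_cases h0 : c = 0
      · rw [hγdef, if_pos h0, h0]; simp
      · rw [hγdef, if_neg h0]
        have hne : ((‖c‖ : ℝ) : ℂ) ≠ 0 := by
          simpa using (norm_pos_iff.mpr h0).ne'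
        exact div_mul_cancel₀ _ hne
    obtain ⟨d, hd⟩ := IsAlgClosed.exists_pow_nat_eq γ (n := 2) (by norm_num)
    have hdnorm : ‖d‖ = 1 := by
      have h8 : ‖d‖ ^ 2 = 1 := by rw [← norm_pow, hd, hγnorm]
      nlinarith [norm_nonneg d]
    obtain ⟨t0, ht0def⟩ : ∃ t : ℝ, t = Real.sqrt ((1 + ‖c‖) / 2) := ⟨_, rfl⟩
    obtain ⟨t1, ht1def⟩ : ∃ t : ℝ, t = Real.sqrt ((1 - ‖c‖) / 2) := ⟨_, rfl⟩
    have ht0 : t0 ^ 2 = (1 + ‖c‖) / 2 := by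
      rw [ht0def]; exact Real.sq_sqrt (by nlinarith)
    have ht1 : t1 ^ 2 = (1 - ‖c‖) / 2 := by
      rw [ht1def]; exact Real.sq_sqrt (by nlinarith)
    obtain ⟨a1, ha1def⟩ : ∃ z : ℂ, z = d * ((t0 : ℝ) : ℂ) := ⟨_, rfl⟩
    obtain ⟨a2, ha2def⟩ : ∃ z : ℂ, z = Complex.I * d * ((t1 : ℝ) : ℂ) := ⟨_, rfl⟩
    obtain ⟨x, hxdef⟩ : ∃ x : EuclideanSpace ℂ (Fin M),
        x = toE (fun j => (if j = i0 then a1 else 0) + (if j = i1 then a2 else 0)) := ⟨_, rfl⟩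
    obtain ⟨xb, hxbdef⟩ : ∃ z : EuclideanSpace ℂ (Fin M),
        z = toE (fun j => (starRingEnd ℂ) (x j)) := ⟨_, rfl⟩
    have hx_apply : ∀ j, x j = (if j = i0 then a1 else 0) + (if j = i1 then a2 else 0) :=
      fun j => by rw [hxdef]; rfl
    have hxb_apply : ∀ j, xb j = (starRingEnd ℂ) (x j) := fun j => by rw [hxbdef]; rfl
    have hx0 : ∀ j, j ≠ i0 → j ≠ i1 → x j = 0 := fun j h0 h1 => by
      rw [hx_apply, if_neg h0, if_neg h1, add_zero]
    have hxi0 : x i0 = a1 := by rw [hx_apply, if_pos rfl, if_neg hi01, add_zero]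
    have hxi1 : x i1 = a2 := by
      rw [hx_apply, if_neg (Ne.symm hi01), if_pos rfl, zero_add]
    have hS2 : ∑ j, x j * x j = (starRingEnd ℂ) c := by
      rw [sum_two hi01 _ (fun j h0 h1 => by rw [hx0 j h0 h1, mul_zero]), hxi0, hxi1]
      have e0 : ((t0 : ℝ) : ℂ) ^ 2 = (((1 + ‖c‖) / 2 : ℝ) : ℂ) := by
        rw [← Complex.ofReal_pow, ht0]
      have e1 : ((t1 : ℝ) : ℂ) ^ 2 = (((1 - ‖c‖) / 2 : ℝ) : ℂ) := by
        rw [← Complex.ofReal_pow, ht1]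
      have h9 : a1 * a1 + a2 * a2 = d ^ 2 * (((t0 : ℝ) : ℂ) ^ 2 - ((t1 : ℝ) : ℂ) ^ 2) := by
        rw [ha1def, ha2def]
        linear_combination (d ^ 2 * ((t1 : ℝ) : ℂ) ^ 2) * Complex.I_sq
      rw [h9, e0, e1, hd, ← hγc]
      push_cast
      ring
    have hS1 : ∑ j, (starRingEnd ℂ) (x j) * x j = 1 := by
      rw [sum_two hi01 _ (fun j h0 h1 => by rw [hx0 j h0 h1, mul_zero]), hxi0, hxi1]
      have hdd := conj_mul_self' d
      rw [hdnorm] at hdd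
      norm_num at hdd
      have k1 : (starRingEnd ℂ) a1 * a1 = ((t0 ^ 2 : ℝ) : ℂ) := by
        rw [ha1def, _root_.map_mul, Complex.conj_ofReal]
        push_cast
        linear_combination ((t0 : ℝ) : ℂ) ^ 2 * hdd
      have k2 : (starRingEnd ℂ) a2 * a2 = ((t1 ^ 2 : ℝ) : ℂ) := by
        rw [ha2def, _root_.map_mul, _root_.map_mul, Complex.conj_ofReal, Complex.conj_I]
        push_cast
        linear_combination (-(Complex.I ^ 2) * ((t1 : ℝ) : ℂ) ^ 2) * hdd +
          (-(((t1 : ℝ) : ℂ) ^ 2)) * Complex.I_sq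
      rw [k1, k2, ht0, ht1]
      push_cast
      ring
    have hxx : ⟪x, x⟫_ℂ = 1 := by
      rw [PiLp.inner_apply]
      simp only [RCLike.inner_apply]
      rw [← hS1]; exact Finset.sum_congr rfl fun _ _ => mul_comm _ _
    have hnormx : ‖x‖ = 1 := by
      have h10 := inner_self_eq_norm_sq_to_K (𝕜 := ℂ) x
      rw [hxx] at h10
      have h11 : (1 : ℝ) = ‖x‖ ^ 2 := by
        simpa [← Complex.ofReal_pow] using congrArg Complex.re h10
      nlinarith [norm_nonneg x]
    have hxxb : ⟪x, xb⟫_ℂ = c := by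
      rw [PiLp.inner_apply]
      simp only [RCLike.inner_apply, hxb_apply]
      have h12 : ∀ j, (starRingEnd ℂ) (x j) * (starRingEnd ℂ) (x j)
          = (starRingEnd ℂ) (x j * x j) := fun j => by rw [_root_.map_mul]
      rw [Finset.sum_congr rfl (fun j _ => h12 j), ← map_sum, hS2, Complex.conj_conj]
    have hxbx : ⟪xb, x⟫_ℂ = (starRingEnd ℂ) c := by
      rw [← inner_conj_symm, hxxb]
    have hxbxb : ⟪xb, xb⟫_ℂ = 1 := by
      rw [PiLp.inner_apply]
      simp only [RCLike.inner_apply, hxb_apply, Complex.conj_conj]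
      have h13 : ∀ j, x j * (starRingEnd ℂ) (x j) = (starRingEnd ℂ) ((starRingEnd ℂ) (x j) * x j) :=
        fun j => by rw [_root_.map_mul, Complex.conj_conj, mul_comm]
      exact hS1
    obtain ⟨y, hydef⟩ : ∃ y : EuclideanSpace ℂ (Fin M),
        y = ((σ : ℝ) : ℂ)⁻¹ • (xb - c • x) := ⟨_, rfl⟩
    have hxy : ⟪x, y⟫_ℂ = 0 := by
      rw [hydef, inner_smul_right, inner_sub_right, inner_smul_right, hxxb, hxx]
      ring
    have hyx : ⟪y, x⟫_ℂ = 0 := by rw [← inner_conj_symm, hxy, map_zero]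
    have hyy : ⟪y, y⟫_ℂ = 1 := by
      have hsub2 : ⟪xb - c • x, xb - c • x⟫_ℂ = ((1 - ‖c‖ ^ 2 : ℝ) : ℂ) := by
        rw [inner_sub_left, inner_sub_right, inner_sub_right, inner_smul_left,
          inner_smul_right, inner_smul_left, inner_smul_right, hxx, hxbxb, hxbx, hxxb]
        have hcc := conj_mul_self' c
        push_cast at hcc ⊢
        linear_combination -hcc
      rw [hydef, inner_smul_left, inner_smul_right, hsub2, Complex.conj_inv,
        Complex.conj_ofReal]
      have hgoal : σ⁻¹ * (σ⁻¹ * (1 - ‖c‖ ^ 2)) = 1 := by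
        rw [← hσsq]; field_simp
      exact_mod_cast hgoal
    have hyN : ‖y‖ = 1 := by
      rw [← pow_eq_one_iff_of_nonneg (norm_nonneg y) two_ne_zero]
      simpa [← Complex.ofReal_pow] using congrArg Complex.re ((inner_self_eq_norm_sq_to_K (𝕜 := ℂ) y).symm.trans hyy)
    -- orthonormal families on {i0, i1}
    obtain ⟨f, hfdef⟩ : ∃ f : Fin M → EuclideanSpace ℂ (Fin M),
        f = fun j => if j = i0 then ua else e := ⟨_, rfl⟩
    obtain ⟨g, hgdef⟩ : ∃ g : Fin M → EuclideanSpace ℂ (Fin M),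
        g = fun j => if j = i0 then x else y := ⟨_, rfl⟩
    have hfi0 : f i0 = ua := by rw [hfdef]; simp
    have hfi1 : f i1 = e := by rw [hfdef]; simp [Ne.symm hi01]
    have hgi0 : g i0 = x := by rw [hgdef]; simp
    have hgi1 : g i1 = y := by rw [hgdef]; simp [Ne.symm hi01]
    have honF : Orthonormal ℂ (Set.restrict {i0, i1} f) := by
      rw [orthonormal_iff_ite]
      rintro ⟨i, hi⟩ ⟨j, hj⟩
      have hi' : i = i0 ∨ i = i1 := by simpa using hi
      have hj' : j = i0 ∨ j = i1 := by simpa using hj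
      rcases hi' with rfl | rfl <;> rcases hj' with rfl | rfl <;>
        simp [Set.restrict, hfi0, hfi1, hinner_aa, hue, heu, hee, hua1, heN, Subtype.mk.injEq,
          hi01, Ne.symm hi01]
    have honG : Orthonormal ℂ (Set.restrict {i0, i1} g) := by
      rw [orthonormal_iff_ite]
      rintro ⟨i, hi⟩ ⟨j, hj⟩
      have hi' : i = i0 ∨ i = i1 := by simpa using hi
      have hj' : j = i0 ∨ j = i1 := by simpa using hj
      rcases hi' with rfl | rfl <;> rcases hj' with rfl | rfl <;>
        simp [Set.restrict, hgi0, hgi1, hxx, hxy, hyx, hyy, hnormx, hyN, Subtype.mk.injEq,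
          hi01, Ne.symm hi01]
    obtain ⟨V, hV, hmap⟩ := exists_unitary f g _ honF honG
    have hVua : V *ᵥ (ua : Fin M → ℂ) = (x : Fin M → ℂ) := by
      have h14 := hmap i0 (by simp)
      rwa [hfi0, hgi0] at h14
    have hVe : V *ᵥ (e : Fin M → ℂ) = (y : Fin M → ℂ) := by
      have h15 := hmap i1 (by simp)
      rwa [hfi1, hgi1] at h15
    have hub_dec : (ub : Fin M → ℂ) = c • (ua : Fin M → ℂ) + ((σ : ℝ) : ℂ) • (e : Fin M → ℂ) := by
      funext j
      have he_apply : e j = ((σ : ℝ) : ℂ)⁻¹ * (ub j - c * ua j) := by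
        rw [hedef, PiLp.smul_apply, PiLp.sub_apply, PiLp.smul_apply, smul_eq_mul, smul_eq_mul]
      rw [Pi.add_apply, Pi.smul_apply, Pi.smul_apply, smul_eq_mul, smul_eq_mul, he_apply]
      field_simp
      ring
    have hVub : V *ᵥ (ub : Fin M → ℂ) = (xb : Fin M → ℂ) := by
      rw [hub_dec, Matrix.mulVec_add, Matrix.mulVec_smul, Matrix.mulVec_smul, hVua, hVe]
      funext j
      have hy_apply : y j = ((σ : ℝ) : ℂ)⁻¹ * (xb j - c * x j) := by
        rw [hydef, PiLp.smul_apply, PiLp.sub_apply, PiLp.smul_apply, smul_eq_mul, smul_eq_mul]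
      rw [Pi.add_apply, Pi.smul_apply, Pi.smul_apply, smul_eq_mul, smul_eq_mul, hy_apply]
      field_simp
      ring
    refine ⟨Vᵀ * V, VtV_unitary V hV,
      by rw [Matrix.transpose_mul, Matrix.transpose_transpose], ?_⟩
    rw [dot_VtV, hadec, hbdec, Matrix.mulVec_smul, Matrix.mulVec_smul, hVua, hVub,
      smul_dotProduct, dotProduct_smul]
    have hdot : (x : Fin M → ℂ) ⬝ᵥ (xb : Fin M → ℂ) = 1 := by
      rw [dotProduct]
      have h16 : ∀ j, x j * xb j = (starRingEnd ℂ) ((starRingEnd ℂ) (x j) * x j) := fun j => by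
        rw [hxb_apply, _root_.map_mul, Complex.conj_conj, mul_comm]
      rw [Finset.sum_congr rfl (fun j _ => h16 j), ← map_sum, hS1]
      simp
    rw [hdot, smul_eq_mul, smul_eq_mul, mul_one, norm_mul, Complex.norm_real,
      Complex.norm_real, Real.norm_eq_abs, Real.norm_eq_abs, abs_of_pos hna, abs_of_pos hnb]

end MaxSNRAux

/-- Euclidean norm of a complex vector. -/
noncomputable def vnorm {M : ℕ} (v : Fin M → ℂ) : ℝ :=
  Real.sqrt (star v ⬝ᵥ v).re

lemma vnorm_toE {M : ℕ} (v : Fin M → ℂ) : ‖toE v‖ = vnorm v := by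
  rw [norm_toE, vnorm]

lemma vnorm_star {M : ℕ} (v : Fin M → ℂ) : ‖toE (star v)‖ = vnorm v := by
  rw [norm_toE, star_star, dotProduct_comm, vnorm]

/-- Max-SNR over unitary symmetric BD-RIS matrices: for nonzero
`h_R, h_T ∈ ℂ^M`, the maximum of `|h_Rᴴ Θ h_T|²` over unitary symmetric
`Θ` equals `‖h_R‖² ‖h_T‖²`. -/
theorem maxSNR_unitary_symmetric {M : ℕ} (hR hT : Fin M → ℂ)
    (hhR : hR ≠ 0) (hhT : hT ≠ 0) :
    IsGreatest {x : ℝ | ∃ Θ : Matrix (Fin M) (Fin M) ℂ,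
        Θᴴ * Θ = 1 ∧ Θ = Θᵀ ∧
        x = ‖star hR ⬝ᵥ (Θ *ᵥ hT)‖ ^ 2}
      (vnorm hR ^ 2 * vnorm hT ^ 2) := by
  constructor
  · obtain ⟨Θ, h1, h2, h3⟩ := mem_aux (star hR) hT (by simpa using hhR) hhT
    refine ⟨Θ, h1, h2, ?_⟩
    rw [h3, vnorm_star, vnorm_toE, mul_pow]
  · rintro v ⟨Θ, h1, h2, rfl⟩
    have hTnorm : ‖toE (Θ *ᵥ hT)‖ = vnorm hT := by
      rw [norm_toE]
      have h4 : star (Θ *ᵥ hT) ⬝ᵥ (Θ *ᵥ hT) = star hT ⬝ᵥ hT := by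
        rw [Matrix.star_mulVec, ← Matrix.dotProduct_mulVec, Matrix.mulVec_mulVec, h1,
          Matrix.one_mulVec]
      rw [h4, vnorm]
    have hCS := norm_inner_le_norm (𝕜 := ℂ) (toE hR) (toE (Θ *ᵥ hT))
    rw [inner_toE, hTnorm, vnorm_toE] at hCS
    have h5 : ‖star hR ⬝ᵥ (Θ *ᵥ hT)‖ ≤ vnorm hR * vnorm hT := by
      exact hCS
    calc ‖star hR ⬝ᵥ (Θ *ᵥ hT)‖ ^ 2 ≤ (vnorm hR * vnorm hT) ^ 2 :=
          pow_le_pow_left₀ (norm_nonneg _) h5 2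
      _ = vnorm hR ^ 2 * vnorm hT ^ 2 := by ring
end

section
/- The two parameterizations of unitary symmetric complex matrices coincide: the set {V D Vᵀ : V real orthogonal M×M, D = diag(e^{iφ₁},…,e^{iφ_M})} equals the set {Q Qᵀ : Q ∈ ℂ^{M×M} unitary}. -/
open Matrix Complex

private lemma mapC_mul {M : ℕ} (A B : Matrix (Fin M) (Fin M) ℝ) :
    (A * B).map (fun x => (x : ℂ)) = A.map (fun x => (x : ℂ)) * B.map (fun x => (x : ℂ)) :=
  Matrix.map_mul (f := Complex.ofRealHom)

private lemma mapC_one {M : ℕ} : ((1 : Matrix (Fin M) (Fin M) ℝ)).map (fun x => (x : ℂ)) = 1 :=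
  Matrix.map_one _ (by simp) (by simp)

private lemma sandwich {M : ℕ} (W : Matrix (Fin M) (Fin M) ℂ) (x y : Fin M → ℂ) :
    (W * diagonal x) * (diagonal y * Wᵀ) = W * diagonal (fun i => x i * y i) * Wᵀ := by
  rw [← Matrix.diagonal_mul_diagonal, ← Matrix.mul_assoc, Matrix.mul_assoc W]

/-- Simultaneous orthogonal diagonalization of two commuting real symmetric matrices. -/
private lemma simul_diag {M : ℕ} (A B : Matrix (Fin M) (Fin M) ℝ) (hA : Aᵀ = A) (hB : Bᵀ = B)
    (hAB : A * B = B * A) :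
    ∃ (V : Matrix (Fin M) (Fin M) ℝ) (a c : Fin M → ℝ),
      Vᵀ * V = 1 ∧ A = V * diagonal a * Vᵀ ∧ B = V * diagonal c * Vᵀ := by
  classical
  have hA' : A.IsHermitian := by
    ext i j
    simpa [Matrix.conjTranspose_apply] using congrFun (congrFun hA i) j
  have hB' : B.IsHermitian := by
    ext i j
    simpa [Matrix.conjTranspose_apply] using congrFun (congrFun hB i) j
  have hTA : (Matrix.toEuclideanLin A).IsSymmetric := Matrix.isHermitian_iff_isSymmetric.mp hA'
  have hTB : (Matrix.toEuclideanLin B).IsSymmetric := Matrix.isHermitian_iff_isSymmetric.mp hB'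
  have hcommT : Commute (Matrix.toEuclideanLin A) (Matrix.toEuclideanLin B) := by
    unfold Commute SemiconjBy
    ext x
    simp [Module.End.mul_apply, Matrix.toEuclideanLin_apply, Matrix.mulVec_mulVec, hAB]
  have internal := LinearMap.IsSymmetric.directSum_isInternal_of_commute hTA hTB hcommT
  set E : ℝ × ℝ → Submodule ℝ (EuclideanSpace ℝ (Fin M)) := fun p =>
    Module.End.eigenspace (Matrix.toEuclideanLin A) p.2 ⊓
      Module.End.eigenspace (Matrix.toEuclideanLin B) p.1 with hE
  have internal' : DirectSum.IsInternal (fun p : {p : ℝ × ℝ // E p ≠ ⊥} => E p) :=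
    DirectSum.isInternal_ne_bot_iff.mpr internal
  letI : Fintype {p : ℝ × ℝ // E p ≠ ⊥} :=
    internal.submodule_iSupIndep.fintypeNeBotOfFiniteDimensional
  have hV'0 := LinearMap.IsSymmetric.orthogonalFamily_eigenspace_inf_eigenspace hTA hTB
  have hV' : OrthogonalFamily ℝ (fun p : {p : ℝ × ℝ // E p ≠ ⊥} => E p)
      (fun p => (E p.val).subtypeₗᵢ) := hV'0.comp Subtype.val_injective
  have hn : Module.finrank ℝ (EuclideanSpace ℝ (Fin M)) = M := finrank_euclideanSpace_fin
  let b := internal'.subordinateOrthonormalBasis hn hV'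
  let μ : Fin M → ℝ × ℝ := fun i => (internal'.subordinateOrthonormalBasisIndex hn i hV').val
  have hmem : ∀ i, b i ∈ Module.End.eigenspace (Matrix.toEuclideanLin A) (μ i).2 ⊓
      Module.End.eigenspace (Matrix.toEuclideanLin B) (μ i).1 := fun i =>
    internal'.subordinateOrthonormalBasis_subordinate hn i hV'
  have hbA : ∀ i, A *ᵥ (b i) = (μ i).2 • (b i) := by
    intro i
    have h := Module.End.mem_eigenspace_iff.mp (hmem i).1
    rw [Matrix.toEuclideanLin_apply] at h
    exact congrArg (WithLp.equiv 2 _) h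
  have hbB : ∀ i, B *ᵥ (b i) = (μ i).1 • (b i) := by
    intro i
    have h := Module.End.mem_eigenspace_iff.mp (hmem i).2
    rw [Matrix.toEuclideanLin_apply] at h
    exact congrArg (WithLp.equiv 2 _) h
  set V : Matrix (Fin M) (Fin M) ℝ := Matrix.of fun k i => b i k with hVdef
  have hVo : Vᵀ * V = 1 := by
    ext i j
    have := orthonormal_iff_ite.mp b.orthonormal i j
    rw [PiLp.inner_apply] at this
    simpa [hVdef, Matrix.mul_apply, Matrix.one_apply, mul_comm] using this
  have hVV' : V * Vᵀ = 1 := mul_eq_one_comm.mp hVo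
  have hAV : A * V = V * diagonal (fun i => (μ i).2) := by
    ext k i
    have h := congrFun (hbA i) k
    simp only [Matrix.mulVec, dotProduct, Pi.smul_apply, smul_eq_mul] at h
    simp only [hVdef, Matrix.mul_apply, Matrix.of_apply, Matrix.diagonal_apply, mul_ite,
      mul_zero, Finset.sum_ite_eq, Finset.sum_ite_eq', Finset.mem_univ, if_true]
    rw [h]; simp [mul_comm]
  have hBV : B * V = V * diagonal (fun i => (μ i).1) := by
    ext k i
    have h := congrFun (hbB i) k
    simp only [Matrix.mulVec, dotProduct, Pi.smul_apply, smul_eq_mul] at h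
    simp only [hVdef, Matrix.mul_apply, Matrix.of_apply, Matrix.diagonal_apply, mul_ite,
      mul_zero, Finset.sum_ite_eq, Finset.sum_ite_eq', Finset.mem_univ, if_true]
    rw [h]; simp [mul_comm]
  refine ⟨V, fun i => (μ i).2, fun i => (μ i).1, hVo, ?_, ?_⟩
  · rw [← hAV, Matrix.mul_assoc, hVV', Matrix.mul_one]
  · rw [← hBV, Matrix.mul_assoc, hVV', Matrix.mul_one]

/-- Every symmetric unitary complex matrix is of the form `V D Vᵀ` with `V` real
orthogonal and `D` a diagonal matrix of unit-modulus entries. -/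
private lemma key_decomp {M : ℕ} (Θ : Matrix (Fin M) (Fin M) ℂ) (hsym : Θᵀ = Θ)
    (huni : Θᴴ * Θ = 1) :
    ∃ (V : Matrix (Fin M) (Fin M) ℝ) (φ : Fin M → ℝ),
      Vᵀ * V = 1 ∧
      Θ = (V.map (fun x => (x : ℂ))) *
            Matrix.diagonal (fun i => Complex.exp ((φ i : ℂ) * Complex.I)) *
            (V.map (fun x => (x : ℂ)))ᵀ := by
  classical
  set A : Matrix (Fin M) (Fin M) ℝ := Matrix.of fun k l => (Θ k l).re with hA
  set B : Matrix (Fin M) (Fin M) ℝ := Matrix.of fun k l => (Θ k l).im with hB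
  have hTheta : Θ = A.map (fun x => (x : ℂ)) + Complex.I • B.map (fun x => (x : ℂ)) := by
    ext k l
    simp [hA, hB, Matrix.map_apply, Matrix.add_apply, Matrix.smul_apply, Complex.ext_iff]
  have hAsym : Aᵀ = A := by
    ext k l
    simp only [hA, Matrix.transpose_apply, Matrix.of_apply]
    exact congrArg Complex.re (congrFun (congrFun hsym l) k).symm
  have hBsym : Bᵀ = B := by
    ext k l
    simp only [hB, Matrix.transpose_apply, Matrix.of_apply]
    exact congrArg Complex.im (congrFun (congrFun hsym l) k).symm
  have hconj : Θᴴ = A.map (fun x => (x : ℂ)) - Complex.I • B.map (fun x => (x : ℂ)) := by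
    ext k l
    simp only [Matrix.conjTranspose_apply, Matrix.sub_apply, Matrix.smul_apply,
      Matrix.map_apply, Matrix.of_apply, hA, hB]
    rw [show Θ l k = Θᵀ k l from rfl, hsym]
    simp [Complex.ext_iff]
  have hexp : (A * A + B * B).map (fun x => (x : ℂ)) +
      Complex.I • ((A * B - B * A).map (fun x => (x : ℂ))) = 1 := by
    rw [← huni, hconj, hTheta,
      Matrix.map_add _ (by push_cast; intro _ _; ring) (A * A) (B * B),
      Matrix.map_sub _ (by push_cast; intro _ _; ring) (A * B) (B * A),
      mapC_mul, mapC_mul, mapC_mul, mapC_mul]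
    set Ac := A.map (fun x => (x : ℂ))
    set Bc := B.map (fun x => (x : ℂ))
    rw [Matrix.sub_mul, Matrix.mul_add, Matrix.mul_add, Matrix.smul_mul, Matrix.smul_mul,
      Matrix.mul_smul, Matrix.mul_smul, smul_smul, Complex.I_mul_I, smul_sub, neg_one_smul]
    abel
  have hcomm : A * B = B * A := by
    have h0 : A * B - B * A = 0 := by
      ext k l
      have := congrArg (fun X => (X k l).im) hexp
      simp only [Matrix.add_apply, Matrix.smul_apply, Matrix.map_apply] at this
      simpa [Matrix.one_apply, apply_ite] using this
    exact sub_eq_zero.mp h0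
  obtain ⟨V, a, c, hVo, hAd, hBd⟩ := simul_diag A B hAsym hBsym hcomm
  set W : Matrix (Fin M) (Fin M) ℂ := V.map (fun x => (x : ℂ)) with hW
  have hWo : Wᵀ * W = 1 := by
    rw [hW, ← Matrix.transpose_map, ← mapC_mul, hVo, mapC_one]
  have hWo' : W * Wᵀ = 1 := mul_eq_one_comm.mp hWo
  set d : Fin M → ℂ := fun i => (a i : ℂ) + (c i : ℂ) * Complex.I with hd
  have hΘW : Θ = W * diagonal d * Wᵀ := by
    rw [hTheta, hAd, hBd, mapC_mul, mapC_mul, mapC_mul, mapC_mul,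
      Matrix.transpose_map]
    rw [Matrix.diagonal_map (by simp), Matrix.diagonal_map (by simp), ← hW]
    rw [← Matrix.smul_mul, ← Matrix.mul_smul, ← Matrix.add_mul, ← Matrix.mul_add]
    congr 2
    ext i j
    simp only [Matrix.add_apply, Matrix.smul_apply, Matrix.diagonal_apply, hd]
    by_cases h : i = j <;> simp [h] <;> ring
  have hWH : Wᴴ = Wᵀ := by
    ext i j; simp [hW, Matrix.conjTranspose_apply, Matrix.map_apply]
  have hdd : ∀ i, (starRingEnd ℂ) (d i) * d i = 1 := by
    have hΘH : Θᴴ = W * diagonal (fun i => (starRingEnd ℂ) (d i)) * Wᵀ := by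
      rw [hΘW, Matrix.conjTranspose_mul, Matrix.conjTranspose_mul,
        Matrix.diagonal_conjTranspose]
      rw [show Wᵀᴴ = W by
        ext i j; simp [hW, Matrix.conjTranspose_apply, Matrix.map_apply, Matrix.transpose_apply],
        hWH, Matrix.mul_assoc]
      rfl
    have h1 : W * diagonal (fun i => (starRingEnd ℂ) (d i) * d i) * Wᵀ = 1 := by
      rw [← huni, hΘH, hΘW]
      simp only [Matrix.mul_assoc]
      rw [← Matrix.mul_assoc Wᵀ W, hWo, Matrix.one_mul,
        ← Matrix.mul_assoc (diagonal fun i => (starRingEnd ℂ) (d i)) (diagonal d),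
        Matrix.diagonal_mul_diagonal]
    have h2 : diagonal (fun i => (starRingEnd ℂ) (d i) * d i) = 1 := by
      calc diagonal (fun i => (starRingEnd ℂ) (d i) * d i)
          = (Wᵀ * W) * diagonal (fun i => (starRingEnd ℂ) (d i) * d i) * (Wᵀ * W) := by
            rw [hWo, Matrix.one_mul, Matrix.mul_one]
        _ = Wᵀ * (W * diagonal (fun i => (starRingEnd ℂ) (d i) * d i) * Wᵀ) * W := by
            simp only [Matrix.mul_assoc]
        _ = Wᵀ * 1 * W := by rw [h1]
        _ = 1 := by rw [Matrix.mul_one, hWo]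
    intro i
    have := congrFun (congrFun h2 i) i
    simpa [Matrix.diagonal_apply_eq, Matrix.one_apply] using this
  have habs : ∀ i, ‖d i‖ = 1 := by
    intro i
    have h := hdd i
    rw [mul_comm, Complex.mul_conj] at h
    have : Complex.normSq (d i) = 1 := by exact_mod_cast h
    rw [Complex.norm_def, this, Real.sqrt_one]
  refine ⟨V, fun i => (d i).arg, hVo, ?_⟩
  have : (fun i => Complex.exp (((d i).arg : ℂ) * Complex.I)) = d := by
    funext i
    have := Complex.norm_mul_exp_arg_mul_I (d i)
    rwa [habs i, Complex.ofReal_one, one_mul] at this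
  rw [this, ← hW, ← hΘW]

/-- The two parameterizations of unitary symmetric complex matrices
coincide: `{V D Vᵀ : V real orthogonal, D = diag(e^{iφ})}` equals
`{Q Qᵀ : Q complex unitary}`. -/
theorem parameterizations_coincide {M : ℕ} :
    {Θ : Matrix (Fin M) (Fin M) ℂ |
      ∃ (V : Matrix (Fin M) (Fin M) ℝ) (φ : Fin M → ℝ),
        Vᵀ * V = 1 ∧
        Θ = (V.map (fun x => (x : ℂ))) *
              Matrix.diagonal (fun i => Complex.exp ((φ i : ℂ) * Complex.I)) *
              (V.map (fun x => (x : ℂ)))ᵀ} =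
    {Θ : Matrix (Fin M) (Fin M) ℂ |
      ∃ Q : Matrix (Fin M) (Fin M) ℂ, Qᴴ * Q = 1 ∧ Θ = Q * Qᵀ} := by
  ext Θ
  simp only [Set.mem_setOf_eq]
  constructor
  · rintro ⟨V, φ, hV, rfl⟩
    set W : Matrix (Fin M) (Fin M) ℂ := V.map (fun x => (x : ℂ)) with hWdef
    have hWo : Wᵀ * W = 1 := by
      rw [hWdef, ← Matrix.transpose_map, ← mapC_mul, hV, mapC_one]
    have hWH : Wᴴ = Wᵀ := by
      ext i j; simp [hWdef, Matrix.conjTranspose_apply, Matrix.map_apply]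
    refine ⟨W * Matrix.diagonal (fun i => Complex.exp ((↑(φ i / 2) : ℂ) * Complex.I)), ?_, ?_⟩
    · rw [Matrix.conjTranspose_mul, hWH, Matrix.diagonal_conjTranspose,
        Matrix.mul_assoc, ← Matrix.mul_assoc Wᵀ, hWo, Matrix.one_mul,
        Matrix.diagonal_mul_diagonal]
      have : (fun i => star (Complex.exp ((↑(φ i / 2) : ℂ) * Complex.I)) *
          Complex.exp ((↑(φ i / 2) : ℂ) * Complex.I)) = fun _ => (1 : ℂ) := by
        funext i
        rw [Complex.star_def, ← Complex.exp_conj, _root_.map_mul, Complex.conj_ofReal,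
          Complex.conj_I, ← Complex.exp_add,
          show (↑(φ i / 2) : ℂ) * -I + ↑(φ i / 2) * I = 0 by ring, Complex.exp_zero]
      rw [show (star fun i => Complex.exp ((↑(φ i / 2) : ℂ) * Complex.I)) =
        (fun i => star (Complex.exp ((↑(φ i / 2) : ℂ) * Complex.I))) from rfl]
      dsimp only
      rw [this, Matrix.diagonal_one]
    · have key : (fun i => Complex.exp ((↑(φ i / 2) : ℂ) * Complex.I) *
          Complex.exp ((↑(φ i / 2) : ℂ) * Complex.I)) =
          fun i => Complex.exp ((↑(φ i) : ℂ) * Complex.I) := by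
        funext i
        rw [← Complex.exp_add]
        congr 1
        push_cast
        ring
      rw [Matrix.transpose_mul, Matrix.diagonal_transpose, sandwich, key]
  · rintro ⟨Q, hQ, rfl⟩
    have hsym : (Q * Qᵀ)ᵀ = Q * Qᵀ := by
      rw [Matrix.transpose_mul, Matrix.transpose_transpose]
    have hQQH : Q * Qᴴ = 1 := mul_eq_one_comm.mp hQ
    have huni : (Q * Qᵀ)ᴴ * (Q * Qᵀ) = 1 := by
      rw [Matrix.conjTranspose_mul, Matrix.mul_assoc, ← Matrix.mul_assoc Qᴴ, hQ,
        Matrix.one_mul]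
      rw [show Qᵀᴴ * Qᵀ = (Q * Qᴴ)ᵀ by
        rw [Matrix.transpose_mul]; rfl]
      rw [hQQH, Matrix.transpose_one]
    exact key_decomp _ hsym huni
end

section
/- Non-uniqueness of the Max-SNR BD-RIS solution: let M > 2, u_R, u_T ∈ ℂ^M unit vectors, and A = u_R u_Tᴴ + (u_R u_Tᴴ)ᵀ = Q Σ Qᵀ a Takagi factorization with Σ = diag(σ₁, σ₂, 0, …, 0). Partition Q = [Q_s | Q_n] where Q_s has the first 2 columns. Then for any (M−2)×(M−2) unitary T, the matrix Θ' = Q' Q'ᵀ with Q' = [Q_s | Q_n T] is unitary, symmetric, and satisfies |u_Rᴴ Θ' u_T| = |u_Rᴴ Q Qᵀ u_T|. -/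
open Matrix Complex

lemma mul_vecMulVec_mul {m : Type*} [Fintype m] [DecidableEq m]
    (M N : Matrix m m ℂ) (u v : m → ℂ) :
    M * Matrix.vecMulVec u v * N = Matrix.vecMulVec (M *ᵥ u) (v ᵥ* N) := by
  ext i k
  simp only [mul_apply, vecMulVec_apply, mulVec, vecMul, dotProduct,
    Finset.sum_mul, Finset.mul_sum]
  congr 1; ext l; congr 1; ext j; ring

lemma vecMulVec_transpose' {m : Type*} (u v : m → ℂ) :
    (Matrix.vecMulVec u v)ᵀ = Matrix.vecMulVec v u := by
  ext i k; simp [vecMulVec_apply, mul_comm]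

lemma transpose_conjT {m : Type*} (M : Matrix m m ℂ) : (Mᵀ)ᴴ = (Mᴴ)ᵀ := by
  ext i k; simp [conjTranspose_apply]

lemma unit_mul_transpose_unitary {m : Type*} [Fintype m] [DecidableEq m]
    (U : Matrix m m ℂ) (h : Uᴴ * U = 1) : (U * Uᵀ)ᴴ * (U * Uᵀ) = 1 := by
  have h2 : U * Uᴴ = 1 := mul_eq_one_comm.mp h
  rw [conjTranspose_mul, mul_assoc, ← mul_assoc Uᴴ, h, one_mul,
    transpose_conjT, ← transpose_mul, h2, transpose_one]

lemma mul_transpose_symm {m : Type*} [Fintype m] (U : Matrix m m ℂ) :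
    U * Uᵀ = (U * Uᵀ)ᵀ := by rw [transpose_mul, transpose_transpose]


/-- Non-uniqueness of the Max-SNR BD-RIS solution. We index `ℂ^M`
(with `M = 2 + n > 2`) by `Fin 2 ⊕ Fin n`, so that the partition
`Q = [Q_s | Q_n]` into the first two columns and the remaining ones is
built in, and `Q' = [Q_s | Q_n T]` is `Q * fromBlocks 1 0 0 T`.
If `A = u_R u_Tᴴ + (u_R u_Tᴴ)ᵀ = Q Σ Qᵀ` is a Takagi factorization with
`Σ = diag(σ₁, σ₂, 0, …, 0)`, then for any unitary `T` the matrix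
`Θ' = Q' Q'ᵀ` is unitary, symmetric, and achieves the same value
`|u_Rᴴ Θ' u_T| = |u_Rᴴ Q Qᵀ u_T|`. -/
theorem maxSNR_solution_nonunique {n : ℕ} (hn : 0 < n)
    (uR uT : Fin 2 ⊕ Fin n → ℂ)
    (huR : star uR ⬝ᵥ uR = 1) (huT : star uT ⬝ᵥ uT = 1)
    (Q : Matrix (Fin 2 ⊕ Fin n) (Fin 2 ⊕ Fin n) ℂ)
    (σ : Fin 2 ⊕ Fin n → ℝ)
    (hQ : Qᴴ * Q = 1) (hσ : ∀ i, 0 ≤ σ i)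
    (hσ0 : ∀ j : Fin n, σ (Sum.inr j) = 0)
    (hfac : Matrix.vecMulVec uR (star uT) + (Matrix.vecMulVec uR (star uT))ᵀ
      = Q * Matrix.diagonal (fun i => (σ i : ℂ)) * Qᵀ)
    (T : Matrix (Fin n) (Fin n) ℂ) (hT : Tᴴ * T = 1) :
    letI Q' := Q * Matrix.fromBlocks (1 : Matrix (Fin 2) (Fin 2) ℂ) 0 0 T
    (Q' * Q'ᵀ)ᴴ * (Q' * Q'ᵀ) = 1 ∧ Q' * Q'ᵀ = (Q' * Q'ᵀ)ᵀ ∧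
    ‖star uR ⬝ᵥ ((Q' * Q'ᵀ) *ᵥ uT)‖
      = ‖star uR ⬝ᵥ ((Q * Qᵀ) *ᵥ uT)‖ := by
  set B : Matrix (Fin 2 ⊕ Fin n) (Fin 2 ⊕ Fin n) ℂ := Matrix.fromBlocks 1 0 0 T with hBdef
  set Q' : Matrix (Fin 2 ⊕ Fin n) (Fin 2 ⊕ Fin n) ℂ := Q * B with hQ'def
  have hB : Bᴴ * B = 1 := by
    rw [hBdef, fromBlocks_conjTranspose, fromBlocks_multiply]
    simp [hT, ← fromBlocks_one]
  have hQ'u : Q'ᴴ * Q' = 1 := by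
    rw [hQ'def, conjTranspose_mul, mul_assoc, ← mul_assoc Qᴴ, hQ, one_mul, hB]
  have hQ'u2 : Q' * Q'ᴴ = 1 := mul_eq_one_comm.mp hQ'u
  refine ⟨unit_mul_transpose_unitary Q' hQ'u, mul_transpose_symm Q', ?_⟩
  · -- main part
    set a : (Fin 2 ⊕ Fin n) → ℂ := Qᴴ *ᵥ uR with ha
    set d : (Fin 2 ⊕ Fin n) → ℂ := Qᵀ *ᵥ uT with hd
    have hQt : Qᵀ * Qᴴᵀ = 1 := by rw [← transpose_mul, hQ, transpose_one]
    have key : Matrix.vecMulVec a (star d) + Matrix.vecMulVec (star d) a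
        = Matrix.diagonal (fun i => (σ i : ℂ)) := by
      have h1 : Qᴴ * (Matrix.vecMulVec uR (star uT)
          + (Matrix.vecMulVec uR (star uT))ᵀ) * Qᴴᵀ
          = Matrix.diagonal (fun i => (σ i : ℂ)) := by
        rw [hfac]
        calc Qᴴ * (Q * Matrix.diagonal (fun i => (σ i : ℂ)) * Qᵀ) * Qᴴᵀ
            = Qᴴ * Q * (Matrix.diagonal (fun i => (σ i : ℂ)) * (Qᵀ * Qᴴᵀ)) := by
              simp only [Matrix.mul_assoc]
          _ = _ := by rw [hQ, hQt, one_mul, mul_one]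
      rw [mul_add, add_mul, vecMulVec_transpose', mul_vecMulVec_mul,
        mul_vecMulVec_mul] at h1
      have e1 : star uT ᵥ* Qᴴᵀ = star d := by
        funext k
        simp [hd, vecMul, mulVec, dotProduct, conjTranspose_apply, mul_comm]
      have e2 : Qᴴ *ᵥ star uT = star d := by
        funext k
        simp [hd, vecMul, mulVec, dotProduct, conjTranspose_apply, mul_comm]
      have e3 : uR ᵥ* Qᴴᵀ = a := by
        funext k
        simp [ha, vecMul, mulVec, dotProduct, conjTranspose_apply, mul_comm]
      rw [e1, e2, e3] at h1
      exact h1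
    have E : ∀ i k, a i * star (d k) + star (d i) * a k
        = Matrix.diagonal (fun i => (σ i : ℂ)) i k := by
      intro i k
      have := congrFun (congrFun key i) k
      simpa [vecMulVec_apply] using this
    -- reduce both sides
    have hsa : star uR ᵥ* Q = star a := by
      rw [ha, star_mulVec, conjTranspose_conjTranspose]
    have hmain : ∀ N : Matrix (Fin 2 ⊕ Fin n) (Fin 2 ⊕ Fin n) ℂ,
        star uR ⬝ᵥ ((Q * N * Qᵀ) *ᵥ uT) = star a ⬝ᵥ (N *ᵥ d) := by
      intro N
      rw [← mulVec_mulVec, ← mulVec_mulVec, dotProduct_mulVec, hsa, ← hd]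
    have hrw : Q' * Q'ᵀ = Q * (B * Bᵀ) * Qᵀ := by
      rw [hQ'def, transpose_mul]
      simp only [Matrix.mul_assoc]
    have hrw2 : Q * Qᵀ = Q * (1 : Matrix _ _ ℂ) * Qᵀ := by rw [mul_one]
    rw [hrw, hrw2, hmain, hmain]
    congr 1
    -- now show star a ⬝ᵥ ((B * Bᵀ) *ᵥ d) = star a ⬝ᵥ (1 *ᵥ d)
    have hBB : B * Bᵀ = Matrix.fromBlocks 1 0 0 (T * Tᵀ) := by
      rw [hBdef, fromBlocks_transpose, fromBlocks_multiply]
      simp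
    rw [hBB, one_mulVec]
    have hmv : ∀ i : Fin 2, (Matrix.fromBlocks (1 : Matrix (Fin 2) (Fin 2) ℂ) 0 0 (T * Tᵀ) *ᵥ d) (Sum.inl i) = d (Sum.inl i) := by
      intro i
      simp [mulVec, dotProduct, Fintype.sum_sum_type, one_apply]
    by_cases hA : ∀ j : Fin n, a (Sum.inr j) = 0
    · simp only [dotProduct, Fintype.sum_sum_type]
      congr 1
      · exact Finset.sum_congr rfl fun i _ => by rw [hmv]
      · refine Finset.sum_congr rfl fun j _ => ?_
        simp [hA j]
    · push_neg at hA
      obtain ⟨j0, hj0⟩ := hA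
      have hd0 : ∀ k : Fin n, d (Sum.inr k) = 0 := by
        have hdj0 : star (d (Sum.inr j0)) = 0 := by
          have := E (Sum.inr j0) (Sum.inr j0)
          rw [Matrix.diagonal_apply_eq] at this
          rw [hσ0 j0] at this
          have h2 : a (Sum.inr j0) * star (d (Sum.inr j0)) = 0 := by
            push_cast at this
            linear_combination this / 2
          rcases mul_eq_zero.mp h2 with h | h
          · exact absurd h hj0
          · exact h
        intro k
        have := E (Sum.inr j0) (Sum.inr k)
        rw [hdj0, zero_mul, add_zero] at this
        have hz : Matrix.diagonal (fun i => (σ i : ℂ)) (Sum.inr j0) (Sum.inr k) = 0 := by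
          rcases eq_or_ne j0 k with rfl | hne
          · simp [hσ0 j0]
          · exact Matrix.diagonal_apply_ne _ (by simpa using hne)
        rw [hz] at this
        rcases mul_eq_zero.mp this with h | h
        · exact absurd h hj0
        · simpa using h
      simp only [dotProduct, Fintype.sum_sum_type]
      congr 1
      · exact Finset.sum_congr rfl fun i _ => by rw [hmv]
      · refine Finset.sum_congr rfl fun j _ => ?_
        have : (Matrix.fromBlocks (1 : Matrix (Fin 2) (Fin 2) ℂ) 0 0 (T * Tᵀ) *ᵥ d) (Sum.inr j) = 0 := by
          simp [mulVec, dotProduct, Fintype.sum_sum_type, hd0]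
        rw [this, hd0 j]
end

section
/- SVD-to-Takagi conversion: let A be complex symmetric with SVD A = F K Gᴴ where K is diagonal with positive distinct diagonal entries. Define t = diag(Fᴴ G*) (the diagonal entries of Fᴴ Ḡ), φᵢ = arg(tᵢ)/2, and F' = F·diag(e^{iφ₁},…,e^{iφₙ}). Then A = F' K F'ᵀ. -/
open Matrix Complex

/-- SVD-to-Takagi conversion: if `A` is complex symmetric with SVD
`A = F K Gᴴ`, `K` diagonal with strictly decreasing positive entries,
then with `t = diag(Fᴴ Ḡ)`, `φᵢ = arg(tᵢ)/2` and
`F' = F · diag(e^{iφ})` one has `A = F' K F'ᵀ`. -/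
theorem svd_to_takagi {N : ℕ}
    (A F G : Matrix (Fin N) (Fin N) ℂ) (k : Fin N → ℝ)
    (hA : A = Aᵀ) (hF : Fᴴ * F = 1) (hG : Gᴴ * G = 1)
    (hkpos : ∀ i, 0 < k i) (hkdec : StrictAnti k)
    (hsvd : A = F * Matrix.diagonal (fun i => (k i : ℂ)) * Gᴴ) :
    letI t : Fin N → ℂ := fun i => (Fᴴ * Gᴴᵀ) i i
    letI F' := F * Matrix.diagonal (fun i => Complex.exp (((t i).arg / 2 : ℝ) * Complex.I))
    A = F' * Matrix.diagonal (fun i => (k i : ℂ)) * F'ᵀ := by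
  have hct : ∀ (M : Matrix (Fin N) (Fin N) ℂ), (Mᵀ)ᴴ = (Mᴴ)ᵀ := by
    intro M; ext i j; simp [Matrix.conjTranspose_apply]
  set K : Matrix (Fin N) (Fin N) ℂ := Matrix.diagonal (fun i => (k i : ℂ)) with hKdef
  set W : Matrix (Fin N) (Fin N) ℂ := Fᴴ * Gᴴᵀ with hWdef
  show A = (F * Matrix.diagonal (fun i => Complex.exp ((((W i i).arg / 2 : ℝ)) * Complex.I))) * K *
      (F * Matrix.diagonal (fun i => Complex.exp ((((W i i).arg / 2 : ℝ)) * Complex.I)))ᵀ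
  have hFF : F * Fᴴ = 1 := mul_eq_one_comm.mp hF
  have hKH : Kᴴ = K := by
    simp [hKdef, Matrix.diagonal_conjTranspose, Pi.star_def, Complex.star_def,
      Complex.conj_ofReal]
  have hKT : Kᵀ = K := by simp [hKdef]
  have hAt : A = Gᴴᵀ * K * Fᵀ := by
    conv_lhs => rw [hA, hsvd]
    rw [Matrix.transpose_mul, Matrix.transpose_mul, hKT, Matrix.mul_assoc]
  have hFtF : Fᴴᵀ * Fᵀ = 1 := by
    rw [← Matrix.transpose_mul, hFF, Matrix.transpose_one]
  have hFtF2 : Fᵀ * Fᴴᵀ = 1 := by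
    rw [← Matrix.transpose_mul, hF, Matrix.transpose_one]
  have hGtG : Gᵀ * Gᴴᵀ = 1 := by
    rw [← Matrix.transpose_mul, hG, Matrix.transpose_one]
  have hWK : W * K = K * (Gᴴ * Fᴴᵀ) := by
    calc W * K = Fᴴ * (Gᴴᵀ * K) * (Fᵀ * Fᴴᵀ) := by
          rw [hFtF2, Matrix.mul_one, hWdef, Matrix.mul_assoc]
    _ = Fᴴ * (Gᴴᵀ * K * Fᵀ) * Fᴴᵀ := by simp only [Matrix.mul_assoc]
    _ = Fᴴ * (F * K * Gᴴ) * Fᴴᵀ := by rw [← hAt, ← hsvd]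
    _ = (Fᴴ * F) * K * (Gᴴ * Fᴴᵀ) := by simp only [Matrix.mul_assoc]
    _ = K * (Gᴴ * Fᴴᵀ) := by rw [hF, Matrix.one_mul]
  have hWH : Wᴴ = Gᵀ * F := by
    rw [hWdef, Matrix.conjTranspose_mul, hct, Matrix.conjTranspose_conjTranspose,
      Matrix.conjTranspose_conjTranspose]
  have hWHW : Wᴴ * W = 1 := by
    calc Wᴴ * W = Gᵀ * (F * Fᴴ) * Gᴴᵀ := by
          rw [hWH, hWdef]; simp only [Matrix.mul_assoc]
    _ = 1 := by rw [hFF, Matrix.mul_one, hGtG]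
  have hWKH : (W * K)ᴴ = K * Wᴴ := by rw [Matrix.conjTranspose_mul, hKH]
  have hK2 : W * (K * K) * Wᴴ = K * K := by
    have e2 : (Gᴴ * Fᴴᵀ)ᴴ = Fᵀ * G := by
      rw [Matrix.conjTranspose_mul, hct, Matrix.conjTranspose_conjTranspose,
        Matrix.conjTranspose_conjTranspose]
    calc W * (K * K) * Wᴴ = (W * K) * (K * Wᴴ) := by simp only [Matrix.mul_assoc]
    _ = (W * K) * (W * K)ᴴ := by rw [hWKH]
    _ = (K * (Gᴴ * Fᴴᵀ)) * (K * (Gᴴ * Fᴴᵀ))ᴴ := by rw [hWK]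
    _ = (K * (Gᴴ * Fᴴᵀ)) * ((Fᵀ * G) * K) := by
          rw [Matrix.conjTranspose_mul, e2, hKH]
    _ = K * (Gᴴ * ((Fᴴᵀ * Fᵀ) * (G * K))) := by simp only [Matrix.mul_assoc]
    _ = K * K := by
          rw [hFtF, Matrix.one_mul, ← Matrix.mul_assoc Gᴴ G K, hG, Matrix.one_mul]
  have hcomm : W * (K * K) = (K * K) * W := by
    calc W * (K * K) = W * (K * K) * (Wᴴ * W) := by rw [hWHW, Matrix.mul_one]
    _ = (W * (K * K) * Wᴴ) * W := by simp only [Matrix.mul_assoc]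
    _ = (K * K) * W := by rw [hK2]
  have hdiag : ∀ i j, i ≠ j → W i j = 0 := by
    intro i j hij
    have h := congrFun (congrFun hcomm i) j
    rw [hKdef, Matrix.diagonal_mul_diagonal] at h
    rw [Matrix.mul_diagonal, Matrix.diagonal_mul] at h
    have hk : (k i : ℂ) * (k i : ℂ) ≠ (k j : ℂ) * (k j : ℂ) := by
      intro hc
      have h1 : k i * k i = k j * k j := by exact_mod_cast hc
      have h2 : k i = k j := by nlinarith [hkpos i, hkpos j]
      exact hij (hkdec.injective h2)
    have hz : W i j * ((k j : ℂ) * (k j : ℂ) - (k i : ℂ) * (k i : ℂ)) = 0 := by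
      linear_combination h
    rcases mul_eq_zero.mp hz with h0 | h0
    · exact h0
    · exact absurd (by linear_combination h0) (Ne.symm hk)
  have hWd : W = Matrix.diagonal (fun i => W i i) := by
    ext i j
    by_cases h : i = j
    · subst h; simp
    · rw [Matrix.diagonal_apply_ne _ h]; exact hdiag i j h
  have htabs : ∀ i, ‖W i i‖ = 1 := by
    intro i
    have h := congrFun (congrFun hWHW i) i
    nth_rewrite 1 [hWd] at h
    nth_rewrite 2 [hWd] at h
    rw [Matrix.diagonal_conjTranspose, Matrix.diagonal_mul_diagonal] at h
    simp only [Matrix.diagonal_apply_eq, Matrix.one_apply_eq, Pi.star_apply] at h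
    have hns : (Complex.normSq (W i i) : ℂ) = 1 := by
      rw [Complex.normSq_eq_conj_mul_self]; exact h
    have hns' : Complex.normSq (W i i) = 1 := by exact_mod_cast hns
    rw [Complex.norm_def, hns', Real.sqrt_one]
  have hexp : ∀ i, Complex.exp (((W i i).arg / 2 : ℝ) * Complex.I) *
      Complex.exp (((W i i).arg / 2 : ℝ) * Complex.I) = W i i := by
    intro i
    rw [← Complex.exp_add]
    have harg : ((((W i i).arg / 2 : ℝ)) : ℂ) * Complex.I +
        (((W i i).arg / 2 : ℝ) : ℂ) * Complex.I = ((W i i).arg : ℂ) * Complex.I := by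
      push_cast; ring
    rw [harg]
    have h := Complex.norm_mul_exp_arg_mul_I (W i i)
    rw [htabs i] at h
    simpa using h
  set D : Matrix (Fin N) (Fin N) ℂ :=
    Matrix.diagonal (fun i => Complex.exp (((W i i).arg / 2 : ℝ) * Complex.I)) with hDdef
  have hDT : Dᵀ = D := by rw [hDdef, Matrix.diagonal_transpose]
  have hDKD : D * K * D = W * K := by
    have hfun : (fun i => Complex.exp (((W i i).arg / 2 : ℝ) * Complex.I) * (k i : ℂ) *
        Complex.exp (((W i i).arg / 2 : ℝ) * Complex.I)) = fun i => W i i * (k i : ℂ) := by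
      funext i
      conv_rhs => rw [← hexp i]
      ring
    calc D * K * D = Matrix.diagonal (fun i => W i i * (k i : ℂ)) := by
          rw [hDdef, hKdef, Matrix.diagonal_mul_diagonal, Matrix.diagonal_mul_diagonal, hfun]
    _ = Matrix.diagonal (fun i => W i i) * K := by
          rw [hKdef, Matrix.diagonal_mul_diagonal]
    _ = W * K := by rw [← hWd]
  calc A = Gᴴᵀ * K * Fᵀ := hAt
  _ = (F * Fᴴ) * Gᴴᵀ * K * Fᵀ := by rw [hFF, Matrix.one_mul]
  _ = F * (W * K) * Fᵀ := by rw [hWdef]; simp only [Matrix.mul_assoc]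
  _ = F * (D * K * D) * Fᵀ := by rw [hDKD]
  _ = (F * D) * K * (F * D)ᵀ := by
      rw [Matrix.transpose_mul, hDT]
      simp only [Matrix.mul_assoc]
end

section
/- For a complex symmetric matrix A with distinct positive singular values and SVD A = F K Gᴴ, the matrix Fᴴ Ḡ is diagonal with unit-modulus diagonal entries. -/
open Matrix Complex

/-- Transpose and conjugate-transpose commute. -/
lemma FHconjG_aux_tcomm {N : ℕ} (M : Matrix (Fin N) (Fin N) ℂ) : Mᵀᴴ = Mᴴᵀ := by
  ext i j
  simp [Matrix.conjTranspose_apply]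

/-- For a complex symmetric matrix `A` with distinct positive singular
values and SVD `A = F K Gᴴ`, the matrix `Fᴴ Ḡ` is diagonal with
unit-modulus diagonal entries. -/
theorem FHconjG_diagonal_unimodular {N : ℕ}
    (A F G : Matrix (Fin N) (Fin N) ℂ) (k : Fin N → ℝ)
    (hA : A = Aᵀ) (hF : Fᴴ * F = 1) (hG : Gᴴ * G = 1)
    (hkpos : ∀ i, 0 < k i) (hkdist : Function.Injective k)
    (hsvd : A = F * Matrix.diagonal (fun i => (k i : ℂ)) * Gᴴ) :
    (∀ i j, i ≠ j → (Fᴴ * Gᴴᵀ) i j = 0) ∧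
    (∀ i, ‖(Fᴴ * Gᴴᵀ) i i‖ = 1) := by
  set Kd := Matrix.diagonal (fun i => (k i : ℂ)) with hKd
  set D := Fᴴ * Gᴴᵀ with hD
  have hKdT : Kdᵀ = Kd := Matrix.diagonal_transpose _
  have hKdH : Kdᴴ = Kd := by
    ext i j
    rcases eq_or_ne i j with h | h
    · subst h
      simp [hKd, Matrix.conjTranspose_apply, Complex.conj_ofReal]
    · simp [hKd, Matrix.conjTranspose_apply, Matrix.diagonal_apply_ne, h, Ne.symm h]
  have hFF : F * Fᴴ = 1 := mul_eq_one_comm.mp hF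
  have hFt : Fᵀ * Fᴴᵀ = 1 := by
    have h := congrArg Matrix.transpose hF
    simpa [Matrix.transpose_mul] using h
  have hA' : F * Kd * Gᴴ = Gᴴᵀ * Kd * Fᵀ := by
    calc F * Kd * Gᴴ = A := hsvd.symm
      _ = Aᵀ := hA
      _ = Gᴴᵀ * Kd * Fᵀ := by
          rw [hsvd]
          simp [Matrix.transpose_mul, hKdT, Matrix.mul_assoc]
  have E1 : Kd * Dᵀ = D * Kd := by
    have h : Fᴴ * (F * Kd * Gᴴ) * Fᴴᵀ = Fᴴ * (Gᴴᵀ * Kd * Fᵀ) * Fᴴᵀ := by rw [hA']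
    calc Kd * Dᵀ = (Fᴴ * F) * Kd * (Gᴴ * Fᴴᵀ) := by
          simp only [hF, hD, Matrix.transpose_mul, Matrix.transpose_transpose,
            Matrix.one_mul, Matrix.mul_assoc]
      _ = Fᴴ * (F * Kd * Gᴴ) * Fᴴᵀ := by
          simp only [Matrix.mul_assoc]
      _ = Fᴴ * (Gᴴᵀ * Kd * Fᵀ) * Fᴴᵀ := h
      _ = (Fᴴ * Gᴴᵀ) * Kd * (Fᵀ * Fᴴᵀ) := by simp only [Matrix.mul_assoc]
      _ = D * Kd := by rw [hFt, ← hD, Matrix.mul_one]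
  have hDu : Dᴴ * D = 1 := by
    have hGt : Gᵀ * Gᴴᵀ = 1 := by
      have h := congrArg Matrix.transpose hG
      simpa [Matrix.transpose_mul] using h
    calc Dᴴ * D = Gᴴᵀᴴ * (F * Fᴴ) * Gᴴᵀ := by
          rw [hD, Matrix.conjTranspose_mul, Matrix.conjTranspose_conjTranspose]
          simp only [Matrix.mul_assoc]
      _ = Gᴴᵀᴴ * Gᴴᵀ := by rw [hFF, Matrix.mul_one]
      _ = Gᵀ * Gᴴᵀ := by rw [FHconjG_aux_tcomm, Matrix.conjTranspose_conjTranspose]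
      _ = 1 := hGt
  have E1c : Kd * Dᴴ = Dᵀᴴ * Kd := by
    have h := congrArg Matrix.conjTranspose E1
    simpa [Matrix.conjTranspose_mul, hKdH] using h.symm
  have hDtu : Dᵀ * Dᵀᴴ = 1 := by
    have h : Dᵀ * Dᴴᵀ = 1 := by
      have h2 := congrArg Matrix.transpose hDu
      simpa [Matrix.transpose_mul] using h2
    rw [FHconjG_aux_tcomm]
    exact h
  have E2 : Kd * D = Dᵀ * Kd := by
    have h1 : Kd = Dᵀᴴ * Kd * D := by
      calc Kd = Kd * (Dᴴ * D) := by rw [hDu, Matrix.mul_one]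
        _ = (Kd * Dᴴ) * D := by rw [Matrix.mul_assoc]
        _ = Dᵀᴴ * Kd * D := by rw [E1c]
    calc Kd * D = (Dᵀ * Dᵀᴴ) * (Kd * D) := by rw [hDtu, Matrix.one_mul]
      _ = Dᵀ * (Dᵀᴴ * Kd * D) := by simp only [Matrix.mul_assoc]
      _ = Dᵀ * Kd := by rw [← h1]
  have e1 : ∀ i j, (k i : ℂ) * D j i = D i j * (k j : ℂ) := by
    intro i j
    have h := congrFun (congrFun E1 i) j
    simpa [hKd, Matrix.diagonal_mul, Matrix.mul_diagonal, Matrix.transpose_apply] using h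
  have e2 : ∀ i j, (k i : ℂ) * D i j = D j i * (k j : ℂ) := by
    intro i j
    have h := congrFun (congrFun E2 i) j
    simpa [hKd, Matrix.diagonal_mul, Matrix.mul_diagonal, Matrix.transpose_apply] using h
  have hoff : ∀ i j, i ≠ j → D i j = 0 := by
    intro i j hij
    have h1 := e1 i j
    have h2 := e2 i j
    have hk : ((k i : ℂ))^2 ≠ ((k j : ℂ))^2 := by
      intro h
      have h' : (k i)^2 = (k j)^2 := by exact_mod_cast h
      have : k i = k j := by
        nlinarith [hkpos i, hkpos j, sq_nonneg (k i - k j), sq_nonneg (k i + k j)]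
      exact hij (hkdist this)
    have hz : (((k i : ℂ))^2 - ((k j : ℂ))^2) * D i j = 0 := by
      linear_combination (k i : ℂ) * h2 + (k j : ℂ) * h1
    rcases mul_eq_zero.mp hz with h | h
    · exact absurd (sub_eq_zero.mp h) hk
    · exact h
  refine ⟨hoff, ?_⟩
  intro i
  have h := congrFun (congrFun hDu i) i
  rw [Matrix.mul_apply] at h
  have hsum : ∑ j, Dᴴ i j * D j i = star (D i i) * D i i := by
    apply Finset.sum_eq_single i
    · intro j _ hji
      rw [hoff j i hji, mul_zero]
    · intro hni; exact absurd (Finset.mem_univ i) hni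
  rw [hsum, Matrix.one_apply_eq] at h
  have h2 : ‖D i i‖ * ‖D i i‖ = 1 := by
    have h3 := congrArg (‖·‖) h
    simpa [norm_mul, Complex.star_def, Complex.norm_conj] using h3
  nlinarith [norm_nonneg (D i i)]
end

section
/- With the optimal Takagi-based BD-RIS, the equivalent scalar channel gain is real and positive: if Θ = Q Qᵀ where A = u_R u_Tᴴ + (u_R u_Tᴴ)ᵀ = Q Σ Qᵀ is a Takagi factorization, then h_Rᴴ Θ h_T = ‖h_R‖ ‖h_T‖ (a positive real number), where u_R = h_R/‖h_R‖, u_T = h_T/‖h_T‖. -/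
open Matrix Complex



lemma key_lemma {M : ℕ} (gR gT : Fin M → ℂ) (σ : Fin M → ℝ) (hσ : ∀ i, 0 ≤ σ i)
    (hRn : ∑ i, gR i * (starRingEnd ℂ) (gR i) = 1)
    (hTn : ∑ i, gT i * (starRingEnd ℂ) (gT i) = 1)
    (hE : ∀ i j, gR i * gT j + gT i * gR j = if i = j then ((σ i : ℝ) : ℂ) else 0) :
    ∑ i, (starRingEnd ℂ) (gR i) * (starRingEnd ℂ) (gT i) = 1 := by
  set a : Fin M → ℝ := fun i => ‖gR i‖ with ha
  set b : Fin M → ℝ := fun i => ‖gT i‖ with hb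
  have hd : ∀ i, gR i * gT i = ((σ i / 2 : ℝ) : ℂ) := by
    intro i
    have := hE i i
    rw [if_pos rfl] at this
    push_cast
    linear_combination this / 2
  have hab : ∀ i, a i * b i = σ i / 2 := by
    intro i
    have h1 : ‖gR i * gT i‖ = ‖((σ i / 2 : ℝ) : ℂ)‖ := by rw [hd i]
    rw [norm_mul, Complex.norm_real, Real.norm_eq_abs, _root_.abs_of_nonneg (by linarith [hσ i])] at h1
    exact h1
  have hoff : ∀ i j, a i * b j = a j * b i := by
    intro i j
    by_cases h : i = j
    · subst h; ring
    · have h0 := hE i j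
      rw [if_neg h] at h0
      have h2 : gR i * gT j = -(gT i * gR j) := by linear_combination h0
      have h3 : ‖gR i * gT j‖ = ‖gT i * gR j‖ := by
        rw [h2, norm_neg]
      rw [norm_mul, norm_mul] at h3
      simp only [ha, hb]
      rw [h3]; ring
  have hra : ∑ i, a i ^ 2 = 1 := by
    have h1 : ∑ i, ((a i ^ 2 : ℝ) : ℂ) = 1 := by
      rw [← hRn]
      refine Finset.sum_congr rfl fun i _ => ?_
      rw [Complex.mul_conj]
      simp only [ha]
      rw [Complex.sq_norm]
    exact_mod_cast h1
  have hrb : ∑ i, b i ^ 2 = 1 := by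
    have h1 : ∑ i, ((b i ^ 2 : ℝ) : ℂ) = 1 := by
      rw [← hTn]
      refine Finset.sum_congr rfl fun i _ => ?_
      rw [Complex.mul_conj]
      simp only [hb]
      rw [Complex.sq_norm]
    exact_mod_cast h1
  -- b = a
  have hk : ∃ k, a k ≠ 0 := by
    by_contra hc
    push_neg at hc
    rw [Finset.sum_eq_zero (fun i _ => by rw [hc i]; ring)] at hra
    norm_num at hra
  obtain ⟨k, hk⟩ := hk
  set t : ℝ := b k / a k with htdef
  have hbt : ∀ j, b j = t * a j := by
    intro j
    by_cases hj : j = k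
    · subst hj; rw [htdef, div_mul_cancel₀ _ hk]
    · rw [htdef, div_mul_eq_mul_div, eq_div_iff hk]
      linarith [hoff k j]
  have ht0 : 0 ≤ t := div_nonneg (norm_nonneg _) (norm_nonneg _)
  have ht1 : t = 1 := by
    have : ∑ i, b i ^ 2 = t ^ 2 * ∑ i, a i ^ 2 := by
      rw [Finset.mul_sum]
      exact Finset.sum_congr rfl fun i _ => by rw [hbt i]; ring
    rw [hrb, hra, mul_one] at this
    nlinarith
  have hsum : ∑ i, (σ i / 2) = 1 := by
    have : ∑ i, (σ i / 2) = ∑ i, a i ^ 2 := by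
      refine Finset.sum_congr rfl fun i _ => ?_
      rw [← hab i, hbt i, ht1]; ring
    rw [this, hra]
  calc ∑ i, (starRingEnd ℂ) (gR i) * (starRingEnd ℂ) (gT i)
      = ∑ i, ((σ i / 2 : ℝ) : ℂ) := by
        refine Finset.sum_congr rfl fun i _ => ?_
        rw [← _root_.map_mul, hd i, Complex.conj_ofReal]
    _ = ((∑ i, (σ i / 2) : ℝ) : ℂ) := by push_cast; ring
    _ = 1 := by rw [hsum]; norm_num


lemma dot_self_eq {M : ℕ} (v : Fin M → ℂ) :
    star v ⬝ᵥ v = ((∑ i, Complex.normSq (v i) : ℝ) : ℂ) := by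
  simp only [dotProduct, Pi.star_apply, Complex.ofReal_sum]
  exact Finset.sum_congr rfl fun i _ => (Complex.normSq_eq_conj_mul_self).symm

lemma vnorm_mul_self {M : ℕ} (v : Fin M → ℂ) :
    ((vnorm v : ℝ) : ℂ) * ((vnorm v : ℝ) : ℂ) = star v ⬝ᵥ v := by
  rw [vnorm, dot_self_eq, Complex.ofReal_re]
  norm_cast
  exact Real.mul_self_sqrt (Finset.sum_nonneg fun i _ => Complex.normSq_nonneg _)

lemma vnorm_pos {M : ℕ} (v : Fin M → ℂ) (hv : v ≠ 0) : 0 < vnorm v := by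
  rw [vnorm, dot_self_eq]
  simp only [Complex.ofReal_re]
  apply Real.sqrt_pos.mpr
  obtain ⟨i, hi⟩ := Function.ne_iff.mp hv
  have : 0 < Complex.normSq (v i) := by rwa [Complex.normSq_pos]
  refine lt_of_lt_of_le this ?_
  exact Finset.single_le_sum (fun j _ => Complex.normSq_nonneg (v j)) (Finset.mem_univ i)

/-- With the optimal Takagi-based BD-RIS `Θ = Q Qᵀ`, where
`A = u_R u_Tᴴ + (u_R u_Tᴴ)ᵀ = Q Σ Qᵀ` is a Takagi factorization of the
normalized channels `u_R = h_R/‖h_R‖`, `u_T = h_T/‖h_T‖`, the equivalent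
scalar channel gain is the positive real number `‖h_R‖ ‖h_T‖`. -/
theorem takagi_channel_gain_real_positive {M : ℕ} (hR hT : Fin M → ℂ)
    (hhR : hR ≠ 0) (hhT : hT ≠ 0)
    (Q : Matrix (Fin M) (Fin M) ℂ) (σ : Fin M → ℝ)
    (hQ : Qᴴ * Q = 1) (hσ : ∀ i, 0 ≤ σ i)
    (hfac :
      letI uR := ((vnorm hR : ℂ)⁻¹) • hR
      letI uT := ((vnorm hT : ℂ)⁻¹) • hT
      Matrix.vecMulVec uR (star uT) + (Matrix.vecMulVec uR (star uT))ᵀ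
        = Q * Matrix.diagonal (fun i => (σ i : ℂ)) * Qᵀ) :
    star hR ⬝ᵥ ((Q * Qᵀ) *ᵥ hT) = ((vnorm hR * vnorm hT : ℝ) : ℂ) := by
  have mul_vecMulVec_mul : ∀ (a b : Fin M → ℂ) (Mx Nx : Matrix (Fin M) (Fin M) ℂ),
      Mx * Matrix.vecMulVec a b * Nxᵀ = Matrix.vecMulVec (Mx *ᵥ a) (Nx *ᵥ b) := by
    intro a b Mx Nx
    ext i j
    simp [Matrix.mul_apply, vecMulVec_apply, Matrix.mulVec, dotProduct,
      Finset.sum_mul, Finset.mul_sum]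
    apply Finset.sum_congr rfl; intros; apply Finset.sum_congr rfl; intros; ring
  set n : ℝ := vnorm hR with hn
  set m : ℝ := vnorm hT with hm
  have hn0 : 0 < n := vnorm_pos hR hhR
  have hm0 : 0 < m := vnorm_pos hT hhT
  have hnc : ((n:ℝ):ℂ) ≠ 0 := by exact_mod_cast ne_of_gt hn0
  have hmc : ((m:ℝ):ℂ) ≠ 0 := by exact_mod_cast ne_of_gt hm0
  have hn2 : ((n:ℝ):ℂ) * ((n:ℝ):ℂ) = star hR ⬝ᵥ hR := vnorm_mul_self hR
  have hm2 : ((m:ℝ):ℂ) * ((m:ℝ):ℂ) = star hT ⬝ᵥ hT := vnorm_mul_self hT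
  set uR : Fin M → ℂ := ((n : ℂ)⁻¹) • hR with huR
  set uT : Fin M → ℂ := ((m : ℂ)⁻¹) • hT with huT
  set gR : Fin M → ℂ := Qᴴ *ᵥ uR with hgR
  set gT : Fin M → ℂ := Qᴴ *ᵥ (star uT) with hgT
  have hQQH : Q * Qᴴ = 1 := mul_eq_one_comm.mp hQ
  have hQTQ : Qᵀ * (Qᴴ)ᵀ = 1 := by rw [← Matrix.transpose_mul, hQ, Matrix.transpose_one]
  -- the diagonalization identity
  have htrans : (Matrix.vecMulVec uR (star uT))ᵀ = Matrix.vecMulVec (star uT) uR := by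
    ext i j; simp [vecMulVec_apply, mul_comm]
  have hD : Matrix.vecMulVec gR gT + Matrix.vecMulVec gT gR
      = Matrix.diagonal (fun i => (σ i : ℂ)) := by
    have h1 := congrArg (fun A => Qᴴ * A * (Qᴴ)ᵀ) hfac
    rw [Matrix.mul_add, Matrix.add_mul, htrans, mul_vecMulVec_mul, mul_vecMulVec_mul] at h1
    rw [hgR, hgT]
    rw [h1]
    simp only [Matrix.mul_assoc]
    rw [hQTQ, Matrix.mul_one, ← Matrix.mul_assoc, hQ, Matrix.one_mul]
  have hE : ∀ i j, gR i * gT j + gT i * gR j = if i = j then ((σ i : ℝ) : ℂ) else 0 := by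
    intro i j
    have := congrFun (congrFun hD i) j
    simpa [vecMulVec_apply, Matrix.diagonal_apply] using this
  -- norms of gR gT
  have huRn : star uR ⬝ᵥ uR = 1 := by
    rw [huR, star_smul, smul_dotProduct, dotProduct_smul, ← hn2]
    simp only [star_inv₀, RCLike.star_def, Complex.conj_ofReal, smul_eq_mul]
    field_simp
  have huTn : star uT ⬝ᵥ uT = 1 := by
    rw [huT, star_smul, smul_dotProduct, dotProduct_smul, ← hm2]
    simp only [star_inv₀, RCLike.star_def, Complex.conj_ofReal, smul_eq_mul]
    field_simp
  have hgRn : star gR ⬝ᵥ gR = 1 := by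
    rw [hgR, Matrix.star_mulVec, Matrix.dotProduct_mulVec, Matrix.vecMul_vecMul,
      Matrix.conjTranspose_conjTranspose, hQQH, Matrix.vecMul_one, huRn]
  have hgTn : star gT ⬝ᵥ gT = 1 := by
    rw [hgT, Matrix.star_mulVec, Matrix.dotProduct_mulVec, Matrix.vecMul_vecMul,
      Matrix.conjTranspose_conjTranspose, hQQH, Matrix.vecMul_one]
    rw [star_star, dotProduct_comm]
    exact huTn
  have hRn : ∑ i, gR i * (starRingEnd ℂ) (gR i) = 1 := by
    rw [← hgRn]
    exact Finset.sum_congr rfl fun i _ => (mul_comm _ _)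
  have hTn : ∑ i, gT i * (starRingEnd ℂ) (gT i) = 1 := by
    rw [← hgTn]
    exact Finset.sum_congr rfl fun i _ => (mul_comm _ _)
  have hfin : ∑ i, (starRingEnd ℂ) (gR i) * (starRingEnd ℂ) (gT i) = 1 :=
    key_lemma gR gT σ hσ hRn hTn hE
  have e1 : star hR ᵥ* Q = fun i => ((n:ℝ):ℂ) * (starRingEnd ℂ) (gR i) := by
    funext i
    simp only [hgR, huR, Matrix.vecMul, Matrix.mulVec, dotProduct,
      Matrix.conjTranspose_apply, Pi.smul_apply, smul_eq_mul, map_sum, _root_.map_mul,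
      RingHomCompTriple.comp_apply, RingHom.id_apply, Pi.star_apply, RCLike.star_def,
      map_inv₀, Complex.conj_ofReal, starRingEnd_self_apply]
    rw [Finset.mul_sum]
    refine Finset.sum_congr rfl fun k _ => ?_
    field_simp
  have e2 : Qᵀ *ᵥ hT = fun i => ((m:ℝ):ℂ) * (starRingEnd ℂ) (gT i) := by
    funext i
    simp only [hgT, huT, Matrix.vecMul, Matrix.mulVec, dotProduct,
      Matrix.conjTranspose_apply, Matrix.transpose_apply, Pi.smul_apply, smul_eq_mul,
      map_sum, _root_.map_mul, Pi.star_apply, RCLike.star_def, map_inv₀, Complex.conj_ofReal,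
      starRingEnd_self_apply, star_star]
    rw [Finset.mul_sum]
    refine Finset.sum_congr rfl fun k _ => ?_
    field_simp
  rw [← Matrix.mulVec_mulVec, Matrix.dotProduct_mulVec, e1, e2]
  calc (fun i => ((n:ℝ):ℂ) * (starRingEnd ℂ) (gR i)) ⬝ᵥ (fun i => ((m:ℝ):ℂ) * (starRingEnd ℂ) (gT i))
      = (((n:ℝ):ℂ) * ((m:ℝ):ℂ)) * ∑ i, (starRingEnd ℂ) (gR i) * (starRingEnd ℂ) (gT i) := by
        rw [dotProduct, Finset.mul_sum]
        exact Finset.sum_congr rfl fun i _ => by ring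
    _ = ((n * m : ℝ) : ℂ) := by rw [hfin, mul_one]; push_cast; ring
end
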